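/- Let ℰ be a ℂ-linear map from (n+a)-qubit matrices to 1-qubit (2×2) matrices, and define ℰ' on n-qubit matrices by ℰ'(ρ) = ℰ(ρ ⊗ 2^{-a}·I_{2^a}) (a maximally mixed, 'dirty', auxiliary state). Then Φ_{ℰ'} = 2^{-a} · tr_aux(Φ_ℰ), where tr_aux is the partial trace over the a auxiliary input wires of the Choi matrix, and for every k ≥ 1, W^{>k}[Φ_{ℰ'}] ≤ W^{>k}[Φ_ℰ]. -/

import Mathlib

open scoped BigOperators ComplexOrder

noncomputable section

/-- The four 1-qubit Pauli matrices, indexed by `Fin 4` (`0 = I`, `1 = X`, `2 = Y`, `3 = Z`). -/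
def pauliMat (q : Fin 4) : Matrix Bool Bool ℂ := fun b b' =>
  if q = 0 then (if b = b' then 1 else 0)
  else if q = 1 then (if b = b' then 0 else 1)
  else if q = 2 then
    (if b then (if b' then 0 else Complex.I) else (if b' then -Complex.I else 0))
  else (if b = b' then (if b then -1 else 1) else 0)

/-- An `m`-qubit Pauli tensor `P = P_1 ⊗ … ⊗ P_m`. -/
def pauliTensor {m : ℕ} (p : Fin m → Fin 4) :
    Matrix (Fin m → Bool) (Fin m → Bool) ℂ :=
  Matrix.of fun x y => ∏ i, pauliMat (p i) (x i) (y i)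

/-- The degree `|P|` of a Pauli: the number of non-identity tensor factors. -/
def pauliDeg {m : ℕ} (p : Fin m → Fin 4) : ℕ :=
  (Finset.univ.filter fun i => p i ≠ 0).card

/-- The Pauli coefficient `Â(P) = 2^{-m} · tr(P·A)`. -/
def pauliCoeff {m : ℕ} (A : Matrix (Fin m → Bool) (Fin m → Bool) ℂ)
    (p : Fin m → Fin 4) : ℂ :=
  ((2 : ℂ) ^ m)⁻¹ * (pauliTensor p * A).trace

/-- The Pauli weight of `A` above degree `k`: `W^{>k}[A] = Σ_{|P|>k} |Â(P)|²`. -/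
def weightAbove {m : ℕ} (k : ℕ) (A : Matrix (Fin m → Bool) (Fin m → Bool) ℂ) : ℝ :=
  ∑ p : Fin m → Fin 4,
    if k < pauliDeg p then ‖pauliCoeff A p‖ ^ 2 else 0

/-- The Pauli weight of `A` at degree exactly `k`. -/
def weightEq {m : ℕ} (k : ℕ) (A : Matrix (Fin m → Bool) (Fin m → Bool) ℂ) : ℝ :=
  ∑ p : Fin m → Fin 4,
    if pauliDeg p = k then ‖pauliCoeff A p‖ ^ 2 else 0

/-- The squared Frobenius norm `‖A‖_F² = tr(A†A) = Σ |A x y|²`. -/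
def frobSq {α : Type*} [Fintype α] (A : Matrix α α ℂ) : ℝ :=
  ∑ x, ∑ y, ‖A x y‖ ^ 2

/-- A matrix is unitary. -/
def IsUnitaryM {α : Type*} [Fintype α] [DecidableEq α] (U : Matrix α α ℂ) : Prop :=
  U * U.conjTranspose = 1 ∧ U.conjTranspose * U = 1

/-- Trace out all qubits except the last one of an `m`-qubit matrix. -/
def chanLast : {m : ℕ} → Matrix (Fin m → Bool) (Fin m → Bool) ℂ → Matrix Bool Bool ℂ
  | 0, _ => 0
  | _ + 1, M => Matrix.of fun b b' =>
      ∑ z, M (Fin.snoc z b) (Fin.snoc z b')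

/-- The Choi representation of a map from `n`-qubit matrices to `1`-qubit matrices:
`Φ_ℰ((x,b),(x',b')) = ℰ(|x⟩⟨x'|)(b,b')`. -/
def choiOfChannel {n : ℕ}
    (E : Matrix (Fin n → Bool) (Fin n → Bool) ℂ → Matrix Bool Bool ℂ) :
    Matrix (Fin (n + 1) → Bool) (Fin (n + 1) → Bool) ℂ :=
  Matrix.of fun w w' =>
    E (Matrix.single (fun i : Fin n => w i.castSucc)
        (fun i : Fin n => w' i.castSucc) 1)
      (w (Fin.last n)) (w' (Fin.last n))

/-- The tensor product `ρ ⊗ ψ` of an `n`-qubit matrix and an `a`-qubit matrix. -/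
def tensorNA {n a : ℕ} (ρ : Matrix (Fin n → Bool) (Fin n → Bool) ℂ)
    (ψ : Matrix (Fin a → Bool) (Fin a → Bool) ℂ) :
    Matrix (Fin (n + a) → Bool) (Fin (n + a) → Bool) ℂ :=
  Matrix.of fun x y =>
    ρ (fun i => x (Fin.castAdd a i)) (fun i => y (Fin.castAdd a i)) *
      ψ (fun j => x (Fin.natAdd n j)) (fun j => y (Fin.natAdd n j))

/-- The channel `ℰ_U : ρ ↦ tr_{all but last qubit}(UρU†)`. -/
def chanU {m : ℕ} (U : Matrix (Fin m → Bool) (Fin m → Bool) ℂ)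
    (ρ : Matrix (Fin m → Bool) (Fin m → Bool) ℂ) : Matrix Bool Bool ℂ :=
  chanLast (U * ρ * U.conjTranspose)

/-- The Choi representation `Φ_U` of `ℰ_U`. -/
def choiU {n : ℕ} (U : Matrix (Fin n → Bool) (Fin n → Bool) ℂ) :
    Matrix (Fin (n + 1) → Bool) (Fin (n + 1) → Bool) ℂ :=
  choiOfChannel (chanU U)

/-- The channel `ℰ_{C,ψ} : ρ ↦ tr_{all but last qubit}(C(ρ⊗ψ)C†)`. -/
def chanAux {n a : ℕ} (C : Matrix (Fin (n + a) → Bool) (Fin (n + a) → Bool) ℂ)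
    (ψ : Matrix (Fin a → Bool) (Fin a → Bool) ℂ)
    (ρ : Matrix (Fin n → Bool) (Fin n → Bool) ℂ) : Matrix Bool Bool ℂ :=
  chanLast (C * tensorNA ρ ψ * C.conjTranspose)

/-- The Choi representation `Φ_{C,ψ}` of `ℰ_{C,ψ}`. -/
def choiAux {n a : ℕ} (C : Matrix (Fin (n + a) → Bool) (Fin (n + a) → Bool) ℂ)
    (ψ : Matrix (Fin a → Bool) (Fin a → Bool) ℂ) :
    Matrix (Fin (n + 1) → Bool) (Fin (n + 1) → Bool) ℂ :=
  choiOfChannel (chanAux C ψ)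

/-- The CZ gate on a subset `S` of the qubits. -/
def czGate {n : ℕ} (S : Finset (Fin n)) :
    Matrix (Fin n → Bool) (Fin n → Bool) ℂ :=
  Matrix.of fun x y =>
    if x = y then (if ∀ i ∈ S, x i = true then -1 else 1) else 0

/-- A layer of CZ gates on a family `G` of (disjoint) subsets of the qubits. -/
def czLayer {n : ℕ} (G : Finset (Finset (Fin n))) :
    Matrix (Fin n → Bool) (Fin n → Bool) ℂ :=
  Matrix.of fun x y =>
    if x = y then ∏ S ∈ G, (if ∀ i ∈ S, x i = true then (-1 : ℂ) else 1) else 0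

/-- A layer of single-qubit gates. -/
def IsLayer {n : ℕ} (L : Matrix (Fin n → Bool) (Fin n → Bool) ℂ) : Prop :=
  ∃ u : Fin n → Matrix Bool Bool ℂ,
    (∀ i, IsUnitaryM (u i)) ∧ ∀ x y, L x y = ∏ i, u i (x i) (y i)

/-- A depth-`d` QAC circuit on `n` qubits: `C = L_0 · M_1 · L_1 ⋯ M_d · L_d` where each `L_i`
is a layer of single-qubit gates and each `M_j` is a product of CZ gates on pairwise
disjoint nonempty subsets of the qubits. -/
structure QACCircuit (n d : ℕ) where
  L : Fin (d + 1) → Matrix (Fin n → Bool) (Fin n → Bool) ℂ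
  G : Fin d → Finset (Finset (Fin n))
  layers : ∀ i, IsLayer (L i)
  gates_nonempty : ∀ j, ∀ S ∈ G j, S.Nonempty
  gates_disjoint : ∀ j, ∀ S ∈ G j, ∀ T ∈ G j, S ≠ T → Disjoint S T

/-- The size of a QAC circuit: the number of CZ gates acting on at least 2 qubits. -/
def QACCircuit.size {n d : ℕ} (c : QACCircuit n d) : ℕ :=
  ∑ j, ((c.G j).filter fun S => 2 ≤ S.card).card

/-- The unitary implemented by a QAC circuit. -/
def QACCircuit.matrix {n d : ℕ} (c : QACCircuit n d) :
    Matrix (Fin n → Bool) (Fin n → Bool) ℂ :=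
  c.L 0 * (List.ofFn fun j : Fin d => czLayer (c.G j) * c.L j.succ).prod

/-- The Fourier coefficient `f̂(S)` of a Boolean function `f : {0,1}^n → {0,1}`. -/
def boolFourierCoeff {n : ℕ} (f : (Fin n → Bool) → Bool) (S : Finset (Fin n)) : ℝ :=
  ((2 : ℝ) ^ n)⁻¹ *
    ∑ x : Fin n → Bool,
      (if f x then (-1 : ℝ) else 1) * ∏ i ∈ S, (if x i then (-1 : ℝ) else 1)

/-- The Fourier weight of a Boolean function above degree `k`. -/
def fweightAbove {n : ℕ} (k : ℕ) (f : (Fin n → Bool) → Bool) : ℝ :=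
  ∑ S : Finset (Fin n), if k < S.card then (boolFourierCoeff f S) ^ 2 else 0



def snocEquivB (m : ℕ) : (Fin m → Bool) × Bool ≃ (Fin (m+1) → Bool) where
  toFun p := Fin.snoc p.1 p.2
  invFun w := (Fin.init w, w (Fin.last m))
  left_inv p := by simp [Fin.init_snoc]
  right_inv w := Fin.snoc_init_self w

lemma sum_snoc' {M : Type*} [AddCommMonoid M] {m : ℕ} (f : (Fin (m+1) → Bool) → M) :
    ∑ w, f w = ∑ x : Fin m → Bool, ∑ b : Bool, f (Fin.snoc x b) := by
  rw [← (snocEquivB m).sum_comp f, Fintype.sum_prod_type]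
  rfl

def appendEquivB (n a : ℕ) : (Fin n → Bool) × (Fin a → Bool) ≃ (Fin (n+a) → Bool) where
  toFun p := Fin.append p.1 p.2
  invFun w := (fun i => w (Fin.castAdd a i), fun j => w (Fin.natAdd n j))
  left_inv p := by
    refine Prod.ext ?_ ?_ <;> funext i <;> simp [Fin.append_left, Fin.append_right]
  right_inv w := by
    funext i
    refine Fin.addCases ?_ ?_ i <;> intro j <;> simp [Fin.append_left, Fin.append_right]

lemma sum_append' {M : Type*} [AddCommMonoid M] {n a : ℕ} (f : (Fin (n+a) → Bool) → M) :
    ∑ w, f w = ∑ x : Fin n → Bool, ∑ z : Fin a → Bool, f (Fin.append x z) := by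
  rw [← (appendEquivB n a).sum_comp f, Fintype.sum_prod_type]
  rfl

lemma prod_pauliMat_zero {a : ℕ} (z z' : Fin a → Bool) :
    ∏ j, pauliMat 0 (z j) (z' j) = if z = z' then 1 else 0 := by
  by_cases h : z = z'
  · subst h; simp [pauliMat]
  · simp only [h, if_false]
    obtain ⟨j, hj⟩ := Function.ne_iff.mp h
    exact Finset.prod_eq_zero (Finset.mem_univ j) (by simp [pauliMat, hj])

lemma append_eq_iff {n a : ℕ} (x : Fin n → Bool) (z : Fin a → Bool) (u : Fin (n+a) → Bool) :
    Fin.append x z = u ↔ (x = fun i => u (Fin.castAdd a i)) ∧ z = fun j => u (Fin.natAdd n j) := by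
  constructor
  · rintro rfl
    exact ⟨by funext i; rw [Fin.append_left], by funext j; rw [Fin.append_right]⟩
  · rintro ⟨rfl, rfl⟩
    funext i
    refine Fin.addCases ?_ ?_ i <;> intro j <;> simp [Fin.append_left, Fin.append_right]

lemma tensor_std {n a : ℕ} (x x' : Fin n → Bool) :
    tensorNA (Matrix.single x x' (1:ℂ))
        (((2:ℂ)^a)⁻¹ • (1 : Matrix (Fin a → Bool) (Fin a → Bool) ℂ)) =
      ((2:ℂ)^a)⁻¹ • ∑ z : Fin a → Bool,
        Matrix.single (Fin.append x z) (Fin.append x' z) (1:ℂ) := by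
  ext u v
  simp only [tensorNA, Matrix.of_apply, Matrix.smul_apply, Matrix.sum_apply,
    Matrix.single, Matrix.one_apply, smul_eq_mul]
  have key : ∀ z : Fin a → Bool,
      (Fin.append x z = u ∧ Fin.append x' z = v) ↔
        (((x = fun i => u (Fin.castAdd a i)) ∧ (x' = fun i => v (Fin.castAdd a i)) ∧
          ((fun j => u (Fin.natAdd n j)) = fun j => v (Fin.natAdd n j))) ∧
          z = fun j => u (Fin.natAdd n j)) := by
    intro z
    rw [append_eq_iff, append_eq_iff]
    constructor
    · rintro ⟨⟨hx, rfl⟩, hx', h2⟩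
      exact ⟨⟨hx, hx', h2⟩, rfl⟩
    · rintro ⟨⟨hx, hx', h2⟩, rfl⟩
      exact ⟨⟨hx, rfl⟩, hx', h2⟩
  rw [Finset.sum_congr rfl fun z _ => if_congr (key z) rfl rfl]
  by_cases h1 : x = fun i => u (Fin.castAdd a i) <;>
    by_cases h2 : x' = fun i => v (Fin.castAdd a i) <;>
    by_cases h3 : (fun j => u (Fin.natAdd n j)) = fun j => v (Fin.natAdd n j) <;>
    simp [h1, h2, h3, Finset.sum_ite_eq']

lemma choi_dirty (n a : ℕ)
    (ℰ : Matrix (Fin (n + a) → Bool) (Fin (n + a) → Bool) ℂ →ₗ[ℂ] Matrix Bool Bool ℂ)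
    (x x' : Fin n → Bool) (b b' : Bool) :
    choiOfChannel
        (fun ρ => ℰ (tensorNA ρ (((2 : ℂ) ^ a)⁻¹ • (1 : Matrix (Fin a → Bool) (Fin a → Bool) ℂ))))
        (Fin.snoc x b) (Fin.snoc x' b') =
      ((2 : ℂ) ^ a)⁻¹ *
        ∑ z : Fin a → Bool,
          choiOfChannel (fun σ => ℰ σ)
            (Fin.snoc (Fin.append x z) b) (Fin.snoc (Fin.append x' z) b') := by
  simp only [choiOfChannel, Matrix.of_apply, Fin.snoc_castSucc, Fin.snoc_last]
  rw [tensor_std, map_smul, map_sum]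
  simp [Matrix.smul_apply, Matrix.sum_apply, Finset.mul_sum]

def extPauli (n a : ℕ) (p : Fin (n + 1) → Fin 4) : Fin (n + a + 1) → Fin 4 :=
  Fin.snoc (Fin.append (fun i => p i.castSucc) (fun _ : Fin a => 0)) (p (Fin.last n))

lemma extPauli_injective (n a : ℕ) : Function.Injective (extPauli n a) := by
  intro p q h
  funext i
  refine Fin.lastCases ?_ ?_ i
  · have := congrFun h (Fin.last (n + a))
    simpa [extPauli, Fin.snoc_last] using this
  · intro j
    have := congrFun h (Fin.castSucc (Fin.castAdd a j))
    simpa [extPauli, Fin.snoc_castSucc, Fin.append_left] using this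

lemma deg_extPauli (n a : ℕ) (p : Fin (n + 1) → Fin 4) :
    pauliDeg (extPauli n a p) = pauliDeg p := by
  unfold pauliDeg
  rw [Finset.card_filter, Finset.card_filter, Fin.sum_univ_castSucc,
    Fin.sum_univ_castSucc (f := fun i : Fin (n + 1) => if p i ≠ 0 then 1 else 0),
    Fin.sum_univ_add]
  simp [extPauli, Fin.snoc_castSucc, Fin.snoc_last, Fin.append_left, Fin.append_right]
  intro i
  simp only [Fin.natAdd_castSucc, Fin.snoc_castSucc, Fin.append_right]
  simp

lemma PT_small {n : ℕ} (p : Fin (n + 1) → Fin 4) (x x' : Fin n → Bool) (b b' : Bool) :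
    pauliTensor p (Fin.snoc x b) (Fin.snoc x' b') =
      (∏ i, pauliMat (p i.castSucc) (x i) (x' i)) * pauliMat (p (Fin.last n)) b b' := by
  simp only [pauliTensor, Matrix.of_apply]
  rw [Fin.prod_univ_castSucc]
  simp [Fin.snoc_castSucc, Fin.snoc_last]

lemma PT_ext {n a : ℕ} (p : Fin (n + 1) → Fin 4) (x x' : Fin n → Bool)
    (z z' : Fin a → Bool) (b b' : Bool) :
    pauliTensor (extPauli n a p) (Fin.snoc (Fin.append x z) b) (Fin.snoc (Fin.append x' z') b') =
      ((∏ i, pauliMat (p i.castSucc) (x i) (x' i)) * (if z = z' then 1 else 0)) *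
        pauliMat (p (Fin.last n)) b b' := by
  simp only [pauliTensor, Matrix.of_apply]
  rw [Fin.prod_univ_castSucc]
  simp only [Fin.snoc_castSucc, Fin.snoc_last, extPauli]
  rw [Fin.prod_univ_add]
  simp only [Fin.append_left, Fin.append_right]
  rw [prod_pauliMat_zero]

lemma sum_comm4 {α β γ δ M : Type*} [Fintype α] [Fintype β] [Fintype γ] [Fintype δ]
    [AddCommMonoid M] (F : α → β → γ → δ → M) :
    ∑ z : α, ∑ b : β, ∑ x' : γ, ∑ b' : δ, F z b x' b' =
      ∑ b : β, ∑ x' : γ, ∑ b' : δ, ∑ z : α, F z b x' b' := by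
  rw [Finset.sum_comm]
  refine Finset.sum_congr rfl fun b _ => ?_
  rw [Finset.sum_comm]
  refine Finset.sum_congr rfl fun x' _ => ?_
  rw [Finset.sum_comm]

lemma coeff_ext (n a : ℕ)
    (ℰ : Matrix (Fin (n + a) → Bool) (Fin (n + a) → Bool) ℂ →ₗ[ℂ] Matrix Bool Bool ℂ)
    (p : Fin (n + 1) → Fin 4) :
    pauliCoeff
        (choiOfChannel fun ρ =>
          ℰ (tensorNA ρ (((2 : ℂ) ^ a)⁻¹ • (1 : Matrix (Fin a → Bool) (Fin a → Bool) ℂ)))) p =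
      pauliCoeff (choiOfChannel fun σ => ℰ σ) (extPauli n a p) := by
  have hF : True := trivial
  set B := choiOfChannel (fun σ => (ℰ σ : Matrix Bool Bool ℂ)) with hB
  set F : (Fin n → Bool) → Bool → (Fin n → Bool) → Bool → (Fin a → Bool) → ℂ :=
    fun x b x' b' z =>
      ((∏ i, pauliMat (p i.castSucc) (x i) (x' i)) * pauliMat (p (Fin.last n)) b b') *
        B (Fin.snoc (Fin.append x' z) b') (Fin.snoc (Fin.append x z) b) with hFdef
  have traceA :
      (pauliTensor p *
          choiOfChannel fun ρ =>
            ℰ (tensorNA ρ (((2 : ℂ) ^ a)⁻¹ • (1 : Matrix (Fin a → Bool) (Fin a → Bool) ℂ)))).trace =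
        ((2 : ℂ) ^ a)⁻¹ * ∑ x, ∑ b, ∑ x', ∑ b', ∑ z, F x b x' b' z := by
    rw [Matrix.trace]
    simp only [Matrix.diag, Matrix.mul_apply]
    rw [sum_snoc', Finset.mul_sum]
    refine Finset.sum_congr rfl fun x _ => ?_
    rw [Finset.mul_sum]
    refine Finset.sum_congr rfl fun b _ => ?_
    rw [sum_snoc', Finset.mul_sum]
    refine Finset.sum_congr rfl fun x' _ => ?_
    rw [Finset.mul_sum]
    refine Finset.sum_congr rfl fun b' _ => ?_
    rw [PT_small, choi_dirty n a ℰ x' x b' b]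
    simp only [hFdef, Finset.mul_sum, ← hB]
    exact Finset.sum_congr rfl fun z _ => by ring
  have traceB :
      (pauliTensor (extPauli n a p) * B).trace =
        ∑ x, ∑ b, ∑ x', ∑ b', ∑ z, F x b x' b' z := by
    rw [Matrix.trace]
    simp only [Matrix.diag, Matrix.mul_apply]
    rw [sum_snoc', sum_append']
    refine Finset.sum_congr rfl fun x _ => ?_
    rw [← sum_comm4 (fun z b x' b' => F x b x' b' z)]
    refine Finset.sum_congr rfl fun z _ => Finset.sum_congr rfl fun b _ => ?_
    rw [sum_snoc', sum_append']
    refine Finset.sum_congr rfl fun x' _ => ?_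
    have hcol : ∀ z' : Fin a → Bool,
        (∑ b', pauliTensor (extPauli n a p) (Fin.snoc (Fin.append x z) b)
            (Fin.snoc (Fin.append x' z') b') *
          B (Fin.snoc (Fin.append x' z') b') (Fin.snoc (Fin.append x z) b)) =
          if z = z' then ∑ b', F x b x' b' z' else 0 := by
      intro z'
      by_cases h : z = z'
      · subst h
        rw [if_pos rfl]
        refine Finset.sum_congr rfl fun b' _ => ?_
        rw [PT_ext, if_pos rfl]
        simp only [hFdef]
        ring
      · rw [if_neg h]
        refine Finset.sum_eq_zero fun b' _ => ?_
        rw [PT_ext, if_neg h]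
        ring
    rw [Finset.sum_congr rfl fun z' _ => hcol z', Finset.sum_ite_eq]
    simp
  simp only [pauliCoeff, traceA, traceB]
  rw [show n + a + 1 = n + 1 + a from by omega, pow_add, mul_inv]
  ring


/-- Fixing `a` auxiliary qubits to the maximally mixed ("dirty") state:
the Choi representation is `2^{-a}` times the partial trace over the auxiliary register,
and the Pauli weight above any degree `k ≥ 1` does not increase. -/
theorem weight_dirty_aux (n a : ℕ)
    (ℰ : Matrix (Fin (n + a) → Bool) (Fin (n + a) → Bool) ℂ →ₗ[ℂ] Matrix Bool Bool ℂ) :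
    (∀ (x x' : Fin n → Bool) (b b' : Bool),
        choiOfChannel
            (fun ρ => ℰ (tensorNA ρ (((2 : ℂ) ^ a)⁻¹ • (1 : Matrix (Fin a → Bool) (Fin a → Bool) ℂ))))
            (Fin.snoc x b) (Fin.snoc x' b') =
          ((2 : ℂ) ^ a)⁻¹ *
            ∑ z : Fin a → Bool,
              choiOfChannel (fun σ => ℰ σ)
                (Fin.snoc (Fin.append x z) b) (Fin.snoc (Fin.append x' z) b')) ∧
      ∀ k : ℕ, 1 ≤ k →
        weightAbove k
            (choiOfChannel fun ρ =>
              ℰ (tensorNA ρ (((2 : ℂ) ^ a)⁻¹ • (1 : Matrix (Fin a → Bool) (Fin a → Bool) ℂ)))) ≤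
          weightAbove k (choiOfChannel fun σ => ℰ σ) := by
  refine ⟨choi_dirty n a ℰ, fun k _ => ?_⟩
  unfold weightAbove
  have hstep : ∀ p : Fin (n + 1) → Fin 4,
      (if k < pauliDeg p then
          ‖pauliCoeff (choiOfChannel fun ρ =>
            ℰ (tensorNA ρ (((2 : ℂ) ^ a)⁻¹ • (1 : Matrix (Fin a → Bool) (Fin a → Bool) ℂ)))) p‖ ^ 2
        else 0) =
        (if k < pauliDeg (extPauli n a p) then
          ‖pauliCoeff (choiOfChannel fun σ => ℰ σ) (extPauli n a p)‖ ^ 2 else 0) := by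
    intro p
    rw [coeff_ext n a ℰ p, deg_extPauli n a p]
  rw [Finset.sum_congr rfl fun p _ => hstep p]
  rw [← Finset.sum_image (g := extPauli n a) (s := Finset.univ)
    (f := fun q => if k < pauliDeg q then
      ‖pauliCoeff (choiOfChannel fun σ => ℰ σ) q‖ ^ 2 else 0)
    (fun p _ q _ h => extPauli_injective n a h)]
  refine Finset.sum_le_sum_of_subset_of_nonneg (Finset.subset_univ _) ?_
  intro q _ _
  split
  · positivity
  · exact le_refl 0
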